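/- Let K be a field of characteristic different from 2. For every point [z₀ : z₁ : z₂ : z₃] ∈ ℙ³(K) with z₀⁴ − z₁⁴ + z₂⁴ − z₃⁴ = 0, there exists a unique point [x₂ : x₃] ∈ ℙ¹(K) satisfying (z₀² + z₁²)x₂ = (z₂² + z₃²)x₃ and (−z₂² + z₃²)x₂ = (z₀² − z₁²)x₃. (Hence the projection to ℙ³ from the locus in ℙ¹ × ℙ³ cut out by these two equations together with the Fermat quartic equation is bijective onto the K-points of the Fermat quartic.) -/

import Mathlib

/-!
The two equations are the rows of a `2 × 2` system whose determinant is the Fermat quartic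
`(z₀² + z₁²)(z₀² - z₁²) - (z₂² + z₃²)(z₃² - z₂²)`, so on the surface the system has rank at most
one. It has rank exactly one because, in characteristic `≠ 2`, the sums and differences of its
coefficients recover `2zᵢ²`, which cannot all vanish. Its solutions are therefore a line in `K²`,
that is, a single point of `ℙ¹`.
-/

open scoped LinearAlgebra.Projectivization
open Projectivization

section Projective

variable {K V : Type*} [DivisionRing K] [AddCommGroup V] [Module K V]

theorem Projectivization.rep_mem_span_singleton_iff {v : V} (hv : v ≠ 0) (p : ℙ K V) :
    p.rep ∈ K ∙ v ↔ p = mk K v hv := by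
  rw [Submodule.mem_span_singleton, ← mk_eq_mk_iff' K _ _ p.rep_nonzero hv, mk_rep]

theorem Projectivization.existsUnique_rep_mem_span_singleton {v : V} (hv : v ≠ 0) :
    ∃! p : ℙ K V, p.rep ∈ K ∙ v := by
  simp_rw [rep_mem_span_singleton_iff hv]
  exact existsUnique_eq

end Projective

section LinearEquations

variable {K : Type*} [Field K]

theorem mul_eq_mul_iff_mem_span_singleton {a b : K} (hab : a ≠ 0 ∨ b ≠ 0) (w : Fin 2 → K) :
    a * w 0 = b * w 1 ↔ w ∈ K ∙ ![b, a] := by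
  rw [Submodule.mem_span_singleton]
  constructor
  · intro h
    rcases hab with ha | hb
    · refine ⟨w 1 / a, funext fun i => ?_⟩
      fin_cases i <;> simp only [Pi.smul_apply, smul_eq_mul, Fin.zero_eta, Fin.mk_one,
        Matrix.cons_val_zero, Matrix.cons_val_one] <;> field_simp
      linear_combination -h
    · refine ⟨w 0 / b, funext fun i => ?_⟩
      fin_cases i <;> simp only [Pi.smul_apply, smul_eq_mul, Fin.zero_eta, Fin.mk_one,
        Matrix.cons_val_zero, Matrix.cons_val_one] <;> field_simp
      linear_combination h
  · rintro ⟨t, rfl⟩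
    simp only [Pi.smul_apply, Matrix.cons_val_zero, Matrix.cons_val_one, smul_eq_mul]
    ring

theorem system_iff_mem_span_singleton_of_det_eq_zero {a b c d : K} (hdet : a * d = b * c)
    (hab : a ≠ 0 ∨ b ≠ 0) (w : Fin 2 → K) :
    a * w 0 = b * w 1 ∧ c * w 0 = d * w 1 ↔ w ∈ K ∙ ![b, a] := by
  refine ⟨fun h => (mul_eq_mul_iff_mem_span_singleton hab w).mp h.1, fun hw => ?_⟩
  obtain ⟨t, rfl⟩ := Submodule.mem_span_singleton.mp hw
  simp only [Pi.smul_apply, Matrix.cons_val_zero, Matrix.cons_val_one, smul_eq_mul]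
  exact ⟨by ring, by linear_combination -t * hdet⟩

theorem existsUnique_proj_solution_of_det_eq_zero {a b c d : K} (hdet : a * d = b * c)
    (hne : (a ≠ 0 ∨ b ≠ 0) ∨ (c ≠ 0 ∨ d ≠ 0)) :
    ∃! p : ℙ K (Fin 2 → K), a * p.rep 0 = b * p.rep 1 ∧ c * p.rep 0 = d * p.rep 1 := by
  rcases hne with hab | hcd
  · simp_rw [system_iff_mem_span_singleton_of_det_eq_zero hdet hab]
    exact existsUnique_rep_mem_span_singleton (by rcases hab with h | h <;> simp [h])
  · have hdet' : c * b = d * a := by linear_combination -hdet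
    simp_rw [and_comm (a := a * _ = _), system_iff_mem_span_singleton_of_det_eq_zero hdet' hcd]
    exact existsUnique_rep_mem_span_singleton (by rcases hcd with h | h <;> simp [h])

end LinearEquations

theorem fermat_coeffs_ne_zero {K : Type*} [Field K] (hK : ringChar K ≠ 2) {z : Fin 4 → K}
    (hz : z ≠ 0) :
    (z 0 ^ 2 + z 1 ^ 2 ≠ 0 ∨ z 2 ^ 2 + z 3 ^ 2 ≠ 0) ∨
      (-(z 2 ^ 2) + z 3 ^ 2 ≠ 0 ∨ z 0 ^ 2 - z 1 ^ 2 ≠ 0) := by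
  have h2 : (2 : K) ≠ 0 := Ring.two_ne_zero hK
  contrapose! hz
  obtain ⟨⟨ha, hb⟩, hc, hd⟩ := hz
  have hsq : ∀ x : K, 2 * x ^ 2 = 0 → x = 0 := fun x hx =>
    pow_eq_zero_iff two_ne_zero |>.mp ((mul_eq_zero.mp hx).resolve_left h2)
  funext i
  fin_cases i
  · exact hsq (z 0) (by linear_combination ha + hd)
  · exact hsq (z 1) (by linear_combination ha - hd)
  · exact hsq (z 2) (by linear_combination hb - hc)
  · exact hsq (z 3) (by linear_combination hb + hc)

theorem proper_transform_bijective (K : Type*) [Field K] (hK : ringChar K ≠ 2)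
    (z : Fin 4 → K) (hz : z ≠ 0)
    (hF : z 0 ^ 4 - z 1 ^ 4 + z 2 ^ 4 - z 3 ^ 4 = 0) :
    ∃! p : ℙ K (Fin 2 → K),
      (z 0 ^ 2 + z 1 ^ 2) * p.rep 0 = (z 2 ^ 2 + z 3 ^ 2) * p.rep 1 ∧
      (-(z 2 ^ 2) + z 3 ^ 2) * p.rep 0 = (z 0 ^ 2 - z 1 ^ 2) * p.rep 1 :=
  existsUnique_proj_solution_of_det_eq_zero (by linear_combination hF)
    (fermat_coeffs_ne_zero hK hz)
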